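/- A simplicial complex Δ is shifted with respect to an ordered set of vertices {v_1 < ... < v_t} if and only if Δ is a t-fold near-cone with respect to {v_1 < ... < v_t}. -/

import Mathlib

open Finset

/-- A (finite, abstract) simplicial complex: a nonempty collection of finite
sets closed under taking subsets. -/
def IsComplex {α : Type} [DecidableEq α] (Δ : Finset (Finset α)) : Prop :=
  Δ.Nonempty ∧ ∀ A ∈ Δ, ∀ B ⊆ A, B ∈ Δ

/-- The link of a face `S` in `Δ`. -/
def link {α : Type} [DecidableEq α] (Δ : Finset (Finset α)) (S : Finset α) :
    Finset (Finset α) :=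
  Δ.filter fun F => Disjoint F S ∧ F ∪ S ∈ Δ

/-- The deletion of a vertex `v` from `Δ`. -/
def del {α : Type} [DecidableEq α] (Δ : Finset (Finset α)) (v : α) :
    Finset (Finset α) :=
  Δ.filter fun F => v ∉ F

/-- A facet: a maximal face. -/
def IsFacet {α : Type} (Δ : Finset (Finset α)) (A : Finset α) : Prop :=
  A ∈ Δ ∧ ∀ B ∈ Δ, A ⊆ B → B = A

/-- Vertex-decomposability: `Δ` is a simplex, or has a shedding vertex `v`
(every face containing `v` admits an exchange) whose deletion and link are
both vertex-decomposable. -/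
inductive VertexDecomposable {α : Type} [DecidableEq α] :
    Finset (Finset α) → Prop
  | simplex (A : Finset α) : VertexDecomposable A.powerset
  | shed (Δ : Finset (Finset α)) (v : α)
      (hshed : ∀ A ∈ Δ, v ∈ A → ∃ w, w ≠ v ∧ w ∉ A ∧ insert w (A.erase v) ∈ Δ)
      (hdel : VertexDecomposable (del Δ v))
      (hlink : VertexDecomposable (link Δ {v})) :
      VertexDecomposable Δ


/-- `Δ` is shifted with respect to the ordered vertices `vs = [v_1 < ⋯ < v_t]`:
whenever `B ∈ Δ`, `w ∈ B`, `w ∉ {v_1,...,v_i}`, and `v_i ∉ B`, then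
`(B \ {w}) ∪ {v_i} ∈ Δ`. -/
def ShiftedWrt {α : Type} [DecidableEq α] (Δ : Finset (Finset α))
    (vs : List α) : Prop :=
  ∀ i, (hi : i < vs.length) → ∀ B ∈ Δ, ∀ w ∈ B, w ∉ vs.take (i + 1) →
    vs.get ⟨i, hi⟩ ∉ B → insert (vs.get ⟨i, hi⟩) (B.erase w) ∈ Δ

/-- `Δ` is a `t`-fold near-cone with respect to `[v_1 < ⋯ < v_t]`: either
`t = 0`, or `Δ` is a near-cone with apex `v_1` and both `del(Δ, v_1)` and
`link(Δ, v_1)` are `(t-1)`-fold near-cones with respect to `[v_2 < ⋯ < v_t]`. -/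
def NearConeFold {α : Type} [DecidableEq α] :
    Finset (Finset α) → List α → Prop
  | _, [] => True
  | Δ, v :: vs =>
      (∀ B ∈ Δ, ∀ w ∈ B, insert v (B.erase w) ∈ Δ) ∧
      NearConeFold (del Δ v) vs ∧ NearConeFold (link Δ {v}) vs

/-!
Peel off the first vertex `v`. The shift condition at `v` is the near-cone condition, since a
face already containing `v` absorbs the shift by closure under subsets. For a later vertex
`u ≠ v`, invariance of `Δ` under the shifts `S_{u←w}` splits, according to whether a face
contains `v`, into the same invariance of `del Δ v` and of `link Δ {v}`; induct on the list of vertices.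
-/

section

variable {α : Type} [DecidableEq α]

def ShiftInvariant (Δ : Finset (Finset α)) (U : List α) (u : α) : Prop :=
  ∀ B ∈ Δ, ∀ w ∈ B, w ∉ U → u ∉ B → insert u (B.erase w) ∈ Δ

theorem shiftedWrt_cons_iff {Δ : Finset (Finset α)} {v : α} {vs : List α} :
    ShiftedWrt Δ (v :: vs) ↔ ShiftInvariant Δ [v] v ∧
      ∀ i (hi : i < vs.length), ShiftInvariant Δ (v :: vs.take (i + 1)) (vs.get ⟨i, hi⟩) := by
  refine ⟨fun h => ⟨h 0 (by simp), fun i hi => h (i + 1) (by simpa using hi)⟩, ?_⟩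
  rintro ⟨h₀, h⟩ (_ | i) hi
  exacts [h₀, h i (by simpa using hi)]

theorem IsLowerSet.del {Δ : Finset (Finset α)} (hΔ : IsLowerSet (Δ : Set (Finset α)))
    (v : α) : IsLowerSet (del Δ v : Set (Finset α)) := by
  intro A B hBA hA
  simp only [mem_coe, _root_.del, mem_filter] at hA ⊢
  exact ⟨hΔ hBA hA.1, fun hv => hA.2 (hBA hv)⟩

theorem IsLowerSet.link {Δ : Finset (Finset α)} (hΔ : IsLowerSet (Δ : Set (Finset α)))
    (S : Finset α) : IsLowerSet (link Δ S : Set (Finset α)) := by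
  intro A B hBA hA
  simp only [mem_coe, _root_.link, mem_filter] at hA ⊢
  exact ⟨hΔ hBA hA.1, hA.2.1.mono_left hBA, hΔ (union_subset_union hBA le_rfl) hA.2.2⟩

theorem nearCone_iff_shiftInvariant {Δ : Finset (Finset α)}
    (hΔ : IsLowerSet (Δ : Set (Finset α))) (v : α) :
    (∀ B ∈ Δ, ∀ w ∈ B, insert v (B.erase w) ∈ Δ) ↔ ShiftInvariant Δ [v] v := by
  refine ⟨fun h B hB w hw _ _ => h B hB w hw, fun h B hB w hw => ?_⟩
  by_cases hvB : v ∈ B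
  · exact hΔ (insert_subset hvB (erase_subset w B)) hB
  · exact h B hB w hw (fun hwv => hvB (List.mem_singleton.mp hwv ▸ hw)) hvB

theorem mem_link_singleton {Δ : Finset (Finset α)} {v : α} {A : Finset α} :
    A ∈ link Δ {v} ↔ A ∈ Δ ∧ v ∉ A ∧ insert v A ∈ Δ := by
  rw [link, mem_filter, disjoint_singleton_right, union_singleton]

theorem shiftInvariant_cons_iff {Δ : Finset (Finset α)}
    (hΔ : IsLowerSet (Δ : Set (Finset α))) {U : List α} {u v : α} (huv : u ≠ v) :
    ShiftInvariant Δ (v :: U) u ↔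
      ShiftInvariant (del Δ v) U u ∧ ShiftInvariant (link Δ {v}) U u := by
  have shift_insert : ∀ {A : Finset α} {w : α}, w ≠ v →
      insert u ((insert v A).erase w) = insert v (insert u (A.erase w)) := fun hwv => by
    rw [erase_insert_of_ne hwv.symm, insert_comm]
  simp only [ShiftInvariant, List.mem_cons, not_or]
  constructor
  · intro h
    constructor
    · intro B hB w hw hwU huB
      obtain ⟨hB, hvB⟩ := mem_filter.mp hB
      refine mem_filter.mpr ⟨h B hB w hw ⟨ne_of_mem_of_not_mem hw hvB, hwU⟩ huB, ?_⟩
      simp [huv.symm, hvB]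
    · intro A hA w hw hwU huA
      obtain ⟨hA, hvA, hvA'⟩ := mem_link_singleton.mp hA
      have hwv : w ≠ v := ne_of_mem_of_not_mem hw hvA
      have hshift := h _ hvA' w (mem_insert_of_mem hw) ⟨hwv, hwU⟩ (by simp [huv, huA])
      rw [shift_insert hwv] at hshift
      refine mem_link_singleton.mpr ⟨hΔ (subset_insert v _) hshift, ?_, hshift⟩
      simp [huv.symm, hvA]
  · rintro ⟨hdel, hlink⟩ B hB w hw ⟨hwv, hwU⟩ huB
    by_cases hvB : v ∈ B
    · have hA : B.erase v ∈ link Δ {v} := by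
        rw [mem_link_singleton, insert_erase hvB]
        exact ⟨hΔ (erase_subset v B) hB, notMem_erase v B, hB⟩
      have hshift := hlink _ hA w (mem_erase.mpr ⟨hwv, hw⟩) hwU
        (fun hu => huB (mem_of_mem_erase hu))
      rw [← insert_erase hvB, shift_insert hwv]
      exact (mem_link_singleton.mp hshift).2.2
    · exact (mem_filter.mp (hdel B (mem_filter.mpr ⟨hB, hvB⟩) w hw hwU huB)).1

theorem shiftedWrt_iff_nearConeFold_of_nodup {vs : List α} (hvs : vs.Nodup)
    {Δ : Finset (Finset α)} (hΔ : IsLowerSet (Δ : Set (Finset α))) :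
    ShiftedWrt Δ vs ↔ NearConeFold Δ vs := by
  induction vs generalizing Δ with
  | nil => exact ⟨fun _ => trivial, fun _ i hi => absurd hi (Nat.not_lt_zero i)⟩
  | cons v vs ih =>
    obtain ⟨hv, hvs⟩ := List.nodup_cons.mp hvs
    have hne : ∀ i (hi : i < vs.length), vs.get ⟨i, hi⟩ ≠ v :=
      fun i hi h => hv (h ▸ List.get_mem vs ⟨i, hi⟩)
    rw [NearConeFold, shiftedWrt_cons_iff, nearCone_iff_shiftInvariant hΔ,
      ← ih hvs (hΔ.del v), ← ih hvs (hΔ.link {v})]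
    simp only [shiftInvariant_cons_iff hΔ (hne _ _), forall_and]
    rfl

end

/-- **Shifted with respect to an ordered vertex set = iterated near-cone.**
A simplicial complex `Δ` is shifted with respect to `{v_1 < ⋯ < v_t}` if and
only if `Δ` is a `t`-fold near-cone with respect to `{v_1 < ⋯ < v_t}`. -/
theorem shiftedWrt_iff_nearConeFold {α : Type} [LinearOrder α]
    (Δ : Finset (Finset α)) (hΔ : IsComplex Δ)
    (vs : List α) (hvs : vs.Chain' (· < ·)) :
    ShiftedWrt Δ vs ↔ NearConeFold Δ vs := by
  have hlower : IsLowerSet (Δ : Set (Finset α)) := fun _ _ hBA hA => hΔ.2 _ hA _ hBA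
  exact shiftedWrt_iff_nearConeFold_of_nodup
    ((List.isChain_iff_pairwise.mp hvs).imp ne_of_lt) hlower
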